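/- arXiv:1705.03337 — 3 statements merged into one kernel-verified Lean document; each statement's English description precedes it below -/
import Mathlib

section
/- Let (q_k)_{k≥0} and (r_k)_{k≥1} be sequences of nonnegative real numbers satisfying q_{k+1} ≤ 49·q_k² + r_{k+1} for every k ≥ 0, with q_0 < 1/200 and r_k ≤ 1/400 for every k ≥ 1. If in addition r_k → 0 as k → ∞, then q_k → 0 as k → ∞. -/
theorem stmt_2 (q r : ℕ → ℝ)
    (hq : ∀ k, 0 ≤ q k) (hr : ∀ k, 1 ≤ k → 0 ≤ r k)
    (hrec : ∀ k, q (k + 1) ≤ 49 * (q k) ^ 2 + r (k + 1))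
    (h0 : q 0 < 1 / 200)
    (hrb : ∀ k, 1 ≤ k → r k ≤ 1 / 400)
    (hr0 : Filter.Tendsto r Filter.atTop (nhds 0)) :
    Filter.Tendsto q Filter.atTop (nhds 0) := by
  have hb : ∀ k, q k < 1 / 200 := by
    intro k
    induction k with
    | zero => exact h0
    | succ n ih =>
      have h1 := hrec n
      have h2 := hrb (n + 1) (by omega)
      nlinarith [hq n]
  have hhalf : ∀ k, q (k + 1) ≤ q k / 2 + r (k + 1) := by
    intro k
    have h1 := hrec k
    nlinarith [hq k, hb k]
  rw [Metric.tendsto_atTop] at hr0 ⊢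
  intro ε hε
  obtain ⟨N, hN⟩ := hr0 (ε / 4) (by linarith)
  have key : ∀ m, q (N + m) ≤ 1 / 200 * (1 / 2) ^ m + ε / 2 := by
    intro m
    induction m with
    | zero => simp; linarith [hb N]
    | succ n ih =>
      have h1 : q (N + n + 1) ≤ q (N + n) / 2 + r (N + n + 1) := hhalf (N + n)
      have h2 : dist (r (N + n + 1)) 0 < ε / 4 := hN (N + n + 1) (by omega)
      rw [Real.dist_eq, sub_zero] at h2
      have h3 : r (N + n + 1) ≤ ε / 4 := (le_abs_self _).trans h2.le
      have : N + (n + 1) = N + n + 1 := by ring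
      rw [this, pow_succ]
      linarith
  obtain ⟨M, hM⟩ : ∃ M : ℕ, (1 / 2 : ℝ) ^ M < 100 * ε := by
    exact exists_pow_lt_of_lt_one (by linarith) (by norm_num)
  refine ⟨N + M, fun k hk => ?_⟩
  rw [Real.dist_eq, sub_zero, abs_of_nonneg (hq k)]
  have hk' : k = N + (k - N) := by omega
  have hmono : (1 / 2 : ℝ) ^ (k - N) ≤ (1 / 2) ^ M := by
    apply pow_le_pow_of_le_one (by norm_num) (by norm_num) (by omega)
  have := key (k - N)
  rw [← hk'] at this
  calc q k ≤ 1 / 200 * (1 / 2) ^ (k - N) + ε / 2 := this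
    _ ≤ 1 / 200 * (1 / 2) ^ M + ε / 2 := by linarith
    _ < ε := by linarith
end

section
/- Let α > 0. Let (q_k)_{k≥0} be a sequence with 0 ≤ q_k < 1/200 for every k, and let (r_k)_{k≥1} be nonnegative reals satisfying q_{k+1} ≤ 49·q_k² + r_{k+1} for every k ≥ 0 and r_k ≤ (α·k·log 3)^{−(1+α)} for every k ≥ 1. Then the series Σ_{k≥0} q_k converges. -/
theorem stmt_3 (α : ℝ) (hα : 0 < α) (q r : ℕ → ℝ)
    (hq0 : ∀ k, 0 ≤ q k) (hq1 : ∀ k, q k < 1 / 200)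
    (hr : ∀ k, 1 ≤ k → 0 ≤ r k)
    (hrec : ∀ k, q (k + 1) ≤ 49 * (q k) ^ 2 + r (k + 1))
    (hrb : ∀ k : ℕ, 1 ≤ k → r k ≤ (α * (k : ℝ) * Real.log 3) ^ (-(1 + α))) :
    Summable q := by
  have hlog3 : (0:ℝ) < Real.log 3 := Real.log_pos (by norm_num)
  -- summability of the comparison sequence
  have hbase : Summable (fun k : ℕ => ((k:ℝ) + 1) ^ (-(1 + α))) := by
    have h := (Real.summable_nat_rpow (p := -(1 + α))).mpr (by linarith)
    have := (summable_nat_add_iff 1).mpr h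
    simpa using this
  have hsumg : Summable (fun k : ℕ => (α * ((k:ℝ) + 1) * Real.log 3) ^ (-(1 + α))) := by
    have heq : (fun k : ℕ => (α * ((k:ℝ) + 1) * Real.log 3) ^ (-(1 + α)))
        = fun k : ℕ => (α * Real.log 3) ^ (-(1 + α)) * (((k:ℝ) + 1) ^ (-(1 + α))) := by
      funext k
      rw [show α * ((k:ℝ) + 1) * Real.log 3 = (α * Real.log 3) * ((k:ℝ) + 1) by ring,
        Real.mul_rpow (by positivity) (by positivity)]
    rw [heq]
    exact hbase.mul_left _
  have hsumr : Summable (fun k : ℕ => r (k + 1)) := by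
    apply Summable.of_nonneg_of_le (fun k => hr (k+1) (by omega)) (fun k => ?_) hsumg
    have := hrb (k+1) (by omega)
    simpa [Nat.cast_add, Nat.cast_one] using this
  set R := ∑' k, r (k + 1) with hR
  have hR0 : 0 ≤ R := tsum_nonneg (fun k => hr (k+1) (by omega))
  have hRn : ∀ n, ∑ k ∈ Finset.range n, r (k + 1) ≤ R :=
    fun n => Summable.sum_le_tsum (Finset.range n) (fun k _ => hr (k+1) (by omega)) hsumr
  -- key contraction
  have hstep : ∀ k, q (k + 1) ≤ (1/4) * q k + r (k + 1) := by
    intro k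
    have h0 := hq0 k
    have h1 := hq1 k
    nlinarith [hrec k]
  have hM : (0:ℝ) ≤ (4/3) * (q 0 + R) := by
    have := hq0 0; positivity
  have key : ∀ n, ∑ k ∈ Finset.range n, q k ≤ (4/3) * (q 0 + R) := by
    intro n
    induction n with
    | zero => simpa using hM
    | succ n ih =>
      rw [Finset.sum_range_succ']
      have h1 : ∑ k ∈ Finset.range n, q (k + 1)
          ≤ ∑ k ∈ Finset.range n, ((1/4) * q k + r (k + 1)) :=
        Finset.sum_le_sum (fun k _ => hstep k)
      have h2 : ∑ k ∈ Finset.range n, ((1/4) * q k + r (k + 1))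
          = (1/4) * ∑ k ∈ Finset.range n, q k + ∑ k ∈ Finset.range n, r (k + 1) := by
        rw [Finset.sum_add_distrib, Finset.mul_sum]
      have h3 := hRn n
      nlinarith [h1, h2, h3, ih]
  exact summable_of_sum_range_le hq0 key
end

section
/- Let q : {1, 2, 3, ...} → [0,1] and ρ : {1, 2, 3, ...} → [0,∞) be functions such that: (i) ρ(m) → 0 as m → ∞; (ii) q(3n) ≤ 49·q(n)² + ρ(9n) for every n ≥ 1; and (iii) q(n') ≤ 7·q(n) whenever n ≤ n' ≤ 3n. If there exists n₀ ≥ 1 with q(n₀) < 1/200 and ρ(m) ≤ 1/400 for all m ≥ 9n₀, then q(n) → 0 as n → ∞. -/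
/-!
Along the scales `3 ^ k * n₀` the values `a k = q (3 ^ k * n₀)` obey
`a (k + 1) ≤ 49 a k ^ 2 + ρ`. Since `49 (1/200) ^ 2 + 1/400 ≤ 1/200`, they stay below `1/200`, and
then the quadratic term is at most `(49/200) a k`: the recursion is a contraction perturbed by
`ρ → 0`, which forces `a k → 0`. Every scale `n ≥ n₀` lies within a factor `3` above some
`3 ^ k * n₀`, so gluing transfers the decay to all scales at the cost of a factor `7`.
-/

open Filter Topology

theorem tendsto_zero_of_le_mul_add {a b : ℕ → ℝ} {c : ℝ} (hc0 : 0 ≤ c) (hc1 : c < 1)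
    (ha : ∀ k, 0 ≤ a k) (hb : Tendsto b atTop (𝓝 0))
    (hrec : ∀ k, a (k + 1) ≤ c * a k + b k) :
    Tendsto a atTop (𝓝 0) := by
  refine tendsto_order.2 ⟨fun e he => .of_forall fun k => he.trans_le (ha k), fun ε hε => ?_⟩
  obtain ⟨M, hM⟩ := eventually_atTop.1
    (hb.eventually (gt_mem_nhds (mul_pos (sub_pos.2 hc1) (half_pos hε))))
  -- Once `b k < (1 - c) ε / 2`, the excess of `a` over `ε / 2` contracts by the factor `c`.
  have hgeom : ∀ j, a (M + j) - ε / 2 ≤ c ^ j * (a M - ε / 2) := by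
    intro j
    induction j with
    | zero => simp
    | succ j ih =>
      rw [← add_assoc]
      calc a (M + j + 1) - ε / 2 ≤ c * (a (M + j) - ε / 2) := by
            linarith [hrec (M + j), hM (M + j) le_self_add]
        _ ≤ c * (c ^ j * (a M - ε / 2)) := by gcongr
        _ = c ^ (j + 1) * (a M - ε / 2) := by ring
  have hpow : Tendsto (fun j => c ^ j * (a M - ε / 2)) atTop (𝓝 0) := by
    simpa using (tendsto_pow_atTop_nhds_zero_of_lt_one hc0 hc1).mul_const (a M - ε / 2)
  obtain ⟨J, hJ⟩ := eventually_atTop.1 (hpow.eventually (gt_mem_nhds (half_pos hε)))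
  refine eventually_atTop.2 ⟨M + J, fun k hk => ?_⟩
  obtain ⟨j, rfl⟩ := Nat.exists_eq_add_of_le (le_self_add.trans hk)
  linarith [hgeom j, hJ j (by omega)]

theorem tendsto_zero_of_le_mul_sq_add {a b : ℕ → ℝ} {C δ : ℝ} (hC : 0 ≤ C)
    (hCδ : C * δ < 1) (ha : ∀ k, 0 ≤ a k) (ha₀ : a 0 ≤ δ) (hbδ : ∀ k, b k ≤ δ - C * δ ^ 2)
    (hb : Tendsto b atTop (𝓝 0)) (hrec : ∀ k, a (k + 1) ≤ C * a k ^ 2 + b k) :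
    Tendsto a atTop (𝓝 0) := by
  have hsmall : ∀ k, a k ≤ δ := by
    intro k
    induction k with
    | zero => exact ha₀
    | succ k ih =>
      have : C * a k ^ 2 ≤ C * δ ^ 2 := by gcongr; exact ha k
      linarith [hrec k, hbδ k]
  have hlin : ∀ k, a (k + 1) ≤ C * δ * a k + b k := fun k => by
    have : C * a k ^ 2 ≤ C * δ * a k := by
      rw [sq, ← mul_assoc]; gcongr; exacts [ha k, hsmall k]
    linarith [hrec k]
  exact tendsto_zero_of_le_mul_add (mul_nonneg hC ((ha 0).trans ha₀)) hCδ ha hb hlin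

theorem Nat.pow_log_div_mul_le {r n₀ n : ℕ} (hn₀ : 0 < n₀) (hn : n₀ ≤ n) :
    r ^ Nat.log r (n / n₀) * n₀ ≤ n := by
  have hne : n / n₀ ≠ 0 := (Nat.div_pos hn hn₀).ne'
  exact (Nat.le_div_iff_mul_le hn₀).1 (Nat.pow_log_le_self r hne)

theorem Nat.lt_mul_pow_log_div_mul {r n₀ : ℕ} (hr : 1 < r) (hn₀ : 0 < n₀) (n : ℕ) :
    n < r * (r ^ Nat.log r (n / n₀) * n₀) := by
  rw [← mul_assoc, ← pow_succ']
  exact (Nat.div_lt_iff_lt_mul hn₀).1 (Nat.lt_pow_succ_log_self hr _)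

theorem tendsto_zero_of_tendsto_pow_mul {q : ℕ → ℝ} {r n₀ : ℕ} {K : ℝ} (hr : 1 < r)
    (hn₀ : 0 < n₀) (hq : ∀ n, 1 ≤ n → 0 ≤ q n)
    (hglue : ∀ n n' : ℕ, 1 ≤ n → n ≤ n' → n' ≤ r * n → q n' ≤ K * q n)
    (hsub : Tendsto (fun k => q (r ^ k * n₀)) atTop (𝓝 0)) :
    Tendsto q atTop (𝓝 0) := by
  set k : ℕ → ℕ := fun n => Nat.log r (n / n₀)
  have hk : Tendsto k atTop atTop := tendsto_atTop_atTop.2 fun m =>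
    ⟨r ^ m * n₀, fun n hn => Nat.le_log_of_pow_le hr ((Nat.le_div_iff_mul_le hn₀).2 hn)⟩
  have hupper : ∀ᶠ n in atTop, q n ≤ K * q (r ^ k n * n₀) := by
    filter_upwards [eventually_ge_atTop n₀] with n hn
    exact hglue _ n (Nat.one_le_iff_ne_zero.2 (by positivity))
      (Nat.pow_log_div_mul_le hn₀ hn) (Nat.lt_mul_pow_log_div_mul hr hn₀ n).le
  refine tendsto_of_tendsto_of_tendsto_of_le_of_le' tendsto_const_nhds ?_
    ((eventually_ge_atTop 1).mono hq) hupper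
  simpa using (hsub.comp hk).const_mul K

theorem stmt_10_general (q ρ : ℕ → ℝ)
    (hq01 : ∀ n, 1 ≤ n → q n ∈ Set.Icc (0 : ℝ) 1)
    (hρlim : Filter.Tendsto ρ Filter.atTop (nhds 0))
    (hrec : ∀ n, 1 ≤ n → q (3 * n) ≤ 49 * (q n) ^ 2 + ρ (9 * n))
    (hglue : ∀ n n' : ℕ, 1 ≤ n → n ≤ n' → n' ≤ 3 * n → q n' ≤ 7 * q n)
    (n₀ : ℕ) (hn₀ : 1 ≤ n₀) (hq₀ : q n₀ < 1 / 200)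
    (hρb : ∀ m, 9 * n₀ ≤ m → ρ m ≤ 1 / 400) :
    Filter.Tendsto q Filter.atTop (nhds 0) := by
  have hpos : ∀ k, 1 ≤ 3 ^ k * n₀ := fun k => Nat.one_le_iff_ne_zero.2 (by positivity)
  have hscale : Tendsto (fun k => 9 * (3 ^ k * n₀)) atTop atTop :=
    StrictMono.tendsto_atTop fun i j hij => by gcongr; omega
  refine tendsto_zero_of_tendsto_pow_mul (by norm_num) hn₀ (fun n hn => (hq01 n hn).1) hglue ?_
  refine tendsto_zero_of_le_mul_sq_add (C := 49) (δ := 1 / 200)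
    (b := fun k => ρ (9 * (3 ^ k * n₀)))
    (by norm_num) (by norm_num) (fun k => (hq01 _ (hpos k)).1) (by simpa using hq₀.le)
    (fun k => ?_) (hρlim.comp hscale) (fun k => ?_)
  · refine (hρb _ ?_).trans (by norm_num)
    exact Nat.mul_le_mul_left 9 (Nat.le_mul_of_pos_left n₀ (by positivity))
  · simpa [pow_succ, mul_assoc, mul_left_comm] using hrec _ (hpos k)

theorem stmt_10 (q ρ : ℕ → ℝ)
    (hq01 : ∀ n, 1 ≤ n → q n ∈ Set.Icc (0 : ℝ) 1)
    (hρ0 : ∀ m, 1 ≤ m → 0 ≤ ρ m)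
    (hρlim : Filter.Tendsto ρ Filter.atTop (nhds 0))
    (hrec : ∀ n, 1 ≤ n → q (3 * n) ≤ 49 * (q n) ^ 2 + ρ (9 * n))
    (hglue : ∀ n n' : ℕ, 1 ≤ n → n ≤ n' → n' ≤ 3 * n → q n' ≤ 7 * q n)
    (n₀ : ℕ) (hn₀ : 1 ≤ n₀) (hq₀ : q n₀ < 1 / 200)
    (hρb : ∀ m, 9 * n₀ ≤ m → ρ m ≤ 1 / 400) :
    Filter.Tendsto q Filter.atTop (nhds 0) :=
  stmt_10_general q ρ hq01 hρlim hrec hglue n₀ hn₀ hq₀ hρb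
end
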